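/- arXiv:math/0301179 — 6 statements merged into one kernel-verified Lean document; each statement's English description precedes it below -/
import Mathlib

section
/- Let n > 2 be an integer, r a prime, and α ≥ 1 with r^α exactly dividing n-1 (i.e., r^α ∣ n-1 but r^(α+1) ∤ n-1). Suppose there exists an integer 1 < a < n with a^(r^α) ≡ 1 (mod n) and gcd(a^(r^(α-1)) - 1, n) = 1. Then there exists a prime factor p of n such that r^α exactly divides p-1 and a mod p is not an r-th power in 𝔽_p. -/
/-!
Modulo every prime factor `p` of `n`, the hypotheses force `a` to have order exactly `r ^ α`,
so `r ^ α ∣ p - 1`. If all these `p` were `≡ 1 (mod r ^ (α + 1))`, so would be their product `n`;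
hence some `p` has `r ^ α ∥ p - 1`. For that `p`, an `r`-th root `b` of `a` would satisfy
`a ^ ((p - 1) / r) = b ^ (p - 1) = 1`, i.e. `r ^ α ∣ (p - 1) / r`, which is impossible.
-/

theorem Nat.modEq_one_of_forall_prime_dvd {n k : ℕ} (hn : n ≠ 0)
    (h : ∀ p, p.Prime → p ∣ n → p ≡ 1 [MOD k]) : n ≡ 1 [MOD k] := by
  induction n using Nat.recOnMul with
  | zero => exact absurd rfl hn
  | one => rfl
  | prime p hp => exact h p hp dvd_rfl
  | mul a b iha ihb =>
    obtain ⟨ha, hb⟩ := mul_ne_zero_iff.mp hn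
    simpa using (iha ha fun p hp hpa => h p hp (hpa.mul_right b)).mul
      (ihb hb fun p hp hpb => h p hp (hpb.mul_left a))

theorem Nat.exists_prime_dvd_not_dvd_sub_one {n k : ℕ} (h : ¬ k ∣ n - 1) :
    ∃ p, p.Prime ∧ p ∣ n ∧ ¬ k ∣ p - 1 := by
  by_contra! hall
  have hn : 1 ≤ n := Nat.pos_of_ne_zero (by rintro rfl; exact h (dvd_zero k))
  refine h ((Nat.modEq_iff_dvd' hn).mp (Nat.modEq_one_of_forall_prime_dvd (by omega) ?_).symm)
  exact fun p hp hpn => ((Nat.modEq_iff_dvd' hp.one_le).mpr (hall p hp hpn)).symm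

theorem ZMod.natCast_ne_one_of_coprime_sub_one {m n p : ℕ} (hp : p ≠ 1) (hpn : p ∣ n)
    (hcop : Nat.Coprime (m - 1) n) : (m : ZMod p) ≠ 1 := by
  intro hm
  have hpm : p ∣ m - 1 := Nat.dvd_of_mod_eq_zero <| Nat.sub_mod_eq_zero_of_mod_eq <| by
    simpa using (ZMod.natCast_eq_natCast_iff' m 1 p).mp (by simpa using hm)
  exact hp (Nat.eq_one_of_dvd_coprimes hcop hpm hpn)

theorem ZMod.orderOf_natCast_eq_prime_pow {n r k a p : ℕ} [Fact r.Prime] (hp : p ≠ 1)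
    (hpn : p ∣ n) (hpow : a ^ r ^ (k + 1) ≡ 1 [MOD n]) (hcop : Nat.Coprime (a ^ r ^ k - 1) n) :
    orderOf (a : ZMod p) = r ^ (k + 1) := by
  refine orderOf_eq_prime_pow ?_ ?_
  · exact_mod_cast ZMod.natCast_ne_one_of_coprime_sub_one hp hpn hcop
  · exact_mod_cast (ZMod.natCast_eq_natCast_iff _ _ _).mpr (hpow.of_dvd hpn)

theorem ZMod.mul_orderOf_dvd_sub_one_of_pow_eq {p r : ℕ} [Fact p.Prime] {b x : ZMod p}
    (hx : x ≠ 0) (hb : b ^ r = x) (hr : r ∣ p - 1) : r * orderOf x ∣ p - 1 := by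
  have hr0 : r ≠ 0 := by
    rintro rfl
    have := (Fact.out : p.Prime).two_le
    rw [zero_dvd_iff] at hr
    omega
  have hb0 : b ≠ 0 := by
    rintro rfl
    exact hx (by simpa [hr0] using hb.symm)
  refine Nat.mul_dvd_of_dvd_div hr (orderOf_dvd_of_pow_eq_one ?_)
  rw [← hb, ← pow_mul, Nat.mul_div_cancel' hr, ZMod.pow_card_sub_one_eq_one hb0]

theorem exists_prime_factor_not_rth_power_general (n r α a : ℕ)
    (hr : r.Prime) (hα : 1 ≤ α)
    (hndvd : ¬ r ^ (α + 1) ∣ n - 1)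
    (hord : a ^ (r ^ α) ≡ 1 [MOD n])
    (hgcd : Nat.gcd (a ^ (r ^ (α - 1)) - 1) n = 1) :
    ∃ p : ℕ, p.Prime ∧ p ∣ n ∧ r ^ α ∣ p - 1 ∧ ¬ r ^ (α + 1) ∣ p - 1 ∧
      ¬ ∃ b : ZMod p, b ^ r = (a : ZMod p) := by
  have := Fact.mk hr
  obtain ⟨k, rfl⟩ : ∃ k, α = k + 1 := ⟨α - 1, by omega⟩
  obtain ⟨p, hp, hpn, hpnd⟩ := Nat.exists_prime_dvd_not_dvd_sub_one hndvd
  have := Fact.mk hp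
  have horder : orderOf (a : ZMod p) = r ^ (k + 1) :=
    ZMod.orderOf_natCast_eq_prime_pow hp.ne_one hpn hord hgcd
  have ha0 : (a : ZMod p) ≠ 0 := fun h0 => by
    simp only [h0, orderOf_zero] at horder
    exact pow_ne_zero _ hr.ne_zero horder.symm
  have hpdvd : r ^ (k + 1) ∣ p - 1 := horder ▸ ZMod.orderOf_dvd_card_sub_one ha0
  refine ⟨p, hp, hpn, hpdvd, hpnd, fun ⟨b, hb⟩ => hpnd ?_⟩
  rw [pow_succ', ← horder]
  exact ZMod.mul_orderOf_dvd_sub_one_of_pow_eq ha0 hb ((dvd_pow_self r k.succ_ne_zero).trans hpdvd)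

theorem exists_prime_factor_not_rth_power (n r α a : ℕ) (hn : 2 < n)
    (hr : r.Prime) (hα : 1 ≤ α)
    (hdvd : r ^ α ∣ n - 1) (hndvd : ¬ r ^ (α + 1) ∣ n - 1)
    (ha1 : 1 < a) (han : a < n)
    (hord : a ^ (r ^ α) ≡ 1 [MOD n])
    (hgcd : Nat.gcd (a ^ (r ^ (α - 1)) - 1) n = 1) :
    ∃ p : ℕ, p.Prime ∧ p ∣ n ∧ r ^ α ∣ p - 1 ∧ ¬ r ^ (α + 1) ∣ p - 1 ∧
      ¬ ∃ b : ZMod p, b ^ r = (a : ZMod p) :=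
  exists_prime_factor_not_rth_power_general n r α a hr hα hndvd hord hgcd
end

section
/- Let n > 2, r prime, r^α || n-1 with α ≥ 1, and suppose there is 1 < a < n with a^(r^α) ≡ 1 (mod n) and gcd(a^(r^(α-1)) - 1, n) = 1. Then every prime factor q of n satisfies r^α ∣ q - 1. -/
/-!
Fix a prime factor `q` of `n`. Modulo `q`, the residue of `a` satisfies `a ^ r ^ α = 1`, while the
gcd condition forbids `a ^ r ^ (α - 1) = 1`; hence `a` has multiplicative order exactly `r ^ α`
in `(ZMod q)ˣ`, and this order divides `q - 1` by Fermat's little theorem.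
-/

theorem ZMod.natCast_ne_one_of_gcd_sub_one_eq_one {m n q : ℕ} [Fact q.Prime] (hqn : q ∣ n)
    (h : Nat.gcd (m - 1) n = 1) : (m : ZMod q) ≠ 1 := by
  intro hm
  have hndvd : ¬ q ∣ m - 1 := fun hdvd =>
    (Fact.out : q.Prime).one_lt.ne' (Nat.dvd_one.1 (h ▸ Nat.dvd_gcd hdvd hqn))
  rcases m with _ | m
  · simp at hm
  · rw [Nat.cast_succ, add_eq_right] at hm
    exact hndvd ((ZMod.natCast_eq_zero_iff _ _).1 hm)

theorem every_prime_factor_cong_one_general (n r α a : ℕ)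
    (hr : r.Prime)
    (hord : a ^ (r ^ α) ≡ 1 [MOD n])
    (hgcd : Nat.gcd (a ^ (r ^ (α - 1)) - 1) n = 1) :
    ∀ q : ℕ, q.Prime → q ∣ n → r ^ α ∣ q - 1 := by
  intro q hq hqn
  have := Fact.mk hq
  have := Fact.mk hr
  rcases α with _ | k
  · simp
  have hone : (a : ZMod q) ^ r ^ (k + 1) = 1 := by
    simpa using (ZMod.natCast_eq_natCast_iff _ _ _).2 (hord.of_dvd hqn)
  have hne : (a : ZMod q) ^ r ^ k ≠ 1 := by
    simpa using ZMod.natCast_ne_one_of_gcd_sub_one_eq_one hqn hgcd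
  have ha0 : (a : ZMod q) ≠ 0 := by
    rintro h
    simp [h, hr.ne_zero] at hone
  rw [← orderOf_eq_prime_pow hne hone]
  exact ZMod.orderOf_dvd_card_sub_one ha0

theorem every_prime_factor_cong_one (n r α a : ℕ) (hn : 2 < n)
    (hr : r.Prime) (hα : 1 ≤ α)
    (hdvd : r ^ α ∣ n - 1) (hndvd : ¬ r ^ (α + 1) ∣ n - 1)
    (ha1 : 1 < a) (han : a < n)
    (hord : a ^ (r ^ α) ≡ 1 [MOD n])
    (hgcd : Nat.gcd (a ^ (r ^ (α - 1)) - 1) n = 1) :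
    ∀ q : ℕ, q.Prime → q ∣ n → r ^ α ∣ q - 1 :=
  every_prime_factor_cong_one_general n r α a hr hord hgcd
end

section
/- Let p be a prime, r a prime with r ∣ p-1, a ∈ 𝔽_p not an r-th power, and let θ be a root of the irreducible polynomial x^r - a in the extension field 𝔽_p(θ). For a positive integer m, the map σ_m sending f(θ) to f(θ^m) (for f a polynomial of degree < r over 𝔽_p) is a field automorphism of 𝔽_p(θ) over 𝔽_p if and only if a^m = a in 𝔽_p. -/
/-! An automorphism of `K[x]/(f)` is determined by the image of the root, which may be any root
of `f` in `K[x]/(f)` (an injective endomorphism of a finite extension is onto). For `f = x^r - a`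
and the candidate image `θ^m` one has `(θ^m)^r - a = a^m - a`. -/

open Polynomial

theorem AdjoinRoot.exists_algEquiv_root_eq_iff {K : Type*} [Field K] {f : K[X]}
    [Fact (Irreducible f)] (x : AdjoinRoot f) :
    (∃ σ : AdjoinRoot f ≃ₐ[K] AdjoinRoot f, σ (root f) = x) ↔ aeval x f = 0 := by
  constructor
  · rintro ⟨σ, rfl⟩
    rw [aeval_algEquiv, AlgHom.comp_apply, aeval_eq, mk_self, map_zero]
  · intro hx
    have : FiniteDimensional K (AdjoinRoot f) :=
      (powerBasis (Fact.out : Irreducible f).ne_zero).finite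
    let φ := liftAlgHom f (Algebra.ofId K _) x hx
    exact ⟨AlgEquiv.ofBijective φ (Algebra.IsAlgebraic.algHom_bijective φ),
      liftAlgHom_root f _ x hx⟩

theorem aeval_pow_X_pow_sub_C {R A : Type*} [CommRing R] [Ring A] [Algebra R A] {θ : A}
    {r : ℕ} {a : R} (hθ : θ ^ r = algebraMap R A a) (m : ℕ) :
    aeval (θ ^ m) (X ^ r - C a) = algebraMap R A (a ^ m - a) := by
  rw [map_sub, map_pow, aeval_X, aeval_C, ← pow_mul, mul_comm, pow_mul, hθ, map_sub, map_pow]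

theorem sigma_m_automorphism_iff_general (p r : ℕ) [Fact p.Prime] (hr : r.Prime)
    (a : ZMod p) (ha : ¬ ∃ b : ZMod p, b ^ r = a)
    (m : ℕ) :
    (∃ σ : AdjoinRoot (X ^ r - C a) ≃ₐ[ZMod p] AdjoinRoot (X ^ r - C a),
        σ (AdjoinRoot.root (X ^ r - C a)) = (AdjoinRoot.root (X ^ r - C a)) ^ m)
      ↔ a ^ m = a := by
  have : Fact (Irreducible (X ^ r - C a)) :=
    ⟨X_pow_sub_C_irreducible_of_prime hr fun b hb => ha ⟨b, hb⟩⟩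
  rw [AdjoinRoot.exists_algEquiv_root_eq_iff,
    aeval_pow_X_pow_sub_C (root_X_pow_sub_C_pow r a), map_eq_zero, sub_eq_zero]

theorem sigma_m_automorphism_iff (p r : ℕ) [Fact p.Prime] (hr : r.Prime)
    (hrp : r ∣ p - 1) (a : ZMod p) (ha : ¬ ∃ b : ZMod p, b ^ r = a)
    (m : ℕ) (hm : 0 < m) :
    (∃ σ : AdjoinRoot (X ^ r - C a) ≃ₐ[ZMod p] AdjoinRoot (X ^ r - C a),
        σ (AdjoinRoot.root (X ^ r - C a)) = (AdjoinRoot.root (X ^ r - C a)) ^ m)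
      ↔ a ^ m = a :=
  sigma_m_automorphism_iff_general p r hr a ha m
end

section
/- Let p be a prime, r a prime dividing p-1, a ∈ 𝔽_p not an r-th power, θ a root of x^r - a, n = p^l · d with gcd(p,d)=1 and a^n = a in 𝔽_p. Then for all i, j ≥ 0, G_n ⊆ G_{d^i p^j}, where G_m = { f(θ) ∈ 𝔽_p(θ)^* : f(θ^m) = f(θ)^m }. -/
/-!
Since `a ^ m = a`, the assignment `θ ↦ θ ^ m` extends to an `𝔽_p`-algebra endomorphism `σ_m` of
`𝔽_p(θ)`, and `G_m` is the set of nonzero `u` with `σ_m u = u ^ m`. From `σ_{mk} = σ_k ∘ σ_m` we get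
`G_m ∩ G_k ⊆ G_{mk}`, and `σ_{p^j}` is the `j`-th power of Frobenius, so `G_{p^j}` contains every
nonzero element. For `u ∈ G_n` with `n = p^l d` this gives `(σ_d u)^{p^l} = σ_n u = (u^d)^{p^l}`,
hence `u ∈ G_d` because Frobenius is injective on the field `𝔽_p(θ)`; multiplicativity then puts
`u` in every `G_{d^i p^j}`.
-/

open Polynomial

/-- The set `G_m = { f(θ) ∈ 𝔽_p(θ)^* : f(θ^m) = f(θ)^m }` inside
`𝔽_p(θ) = 𝔽_p[x]/(x^r - a)`. -/
def Gset (p r : ℕ) (a : ZMod p) (m : ℕ) : Set (AdjoinRoot (X ^ r - C a)) :=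
  {u | u ≠ 0 ∧ ∀ f : Polynomial (ZMod p),
    Polynomial.aeval (AdjoinRoot.root (X ^ r - C a)) f = u →
    Polynomial.aeval ((AdjoinRoot.root (X ^ r - C a)) ^ m) f = u ^ m}

lemma pow_pow_eq_self_of_pow_eq_self {M : Type*} [Monoid M] {a : M} {m : ℕ} (h : a ^ m = a) :
    ∀ i : ℕ, a ^ m ^ i = a
  | 0 => pow_one a
  | i + 1 => by rw [pow_succ, pow_mul, pow_pow_eq_self_of_pow_eq_self h i, h]

lemma ZMod.aeval_pow_card_pow {p : ℕ} [Fact p.Prime] {S : Type*} [Semiring S]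
    [Algebra (ZMod p) S] (x : S) (f : (ZMod p)[X]) :
    ∀ n : ℕ, aeval (x ^ p ^ n) f = aeval x f ^ p ^ n
  | 0 => by simp
  | n + 1 => by
    rw [pow_succ, pow_mul, ← expand_aeval, ZMod.expand_card, map_pow,
      ZMod.aeval_pow_card_pow x f n, pow_mul]

namespace AdjoinRoot

section PowRootHom

variable {K : Type*} [Field K] {r : ℕ} {a : K}

/-- The endomorphism `θ ↦ θ ^ m`, well defined because `(θ ^ m) ^ r = (θ ^ r) ^ m = a ^ m = a`. -/
noncomputable def powRootHom (m : ℕ) (ham : a ^ m = a) :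
    AdjoinRoot (X ^ r - C a) →ₐ[K] AdjoinRoot (X ^ r - C a) :=
  liftAlgHom _ (Algebra.ofId _ _) (root _ ^ m) (by
    rw [eval₂_sub, eval₂_pow, eval₂_X, eval₂_C, ← pow_mul, mul_comm, pow_mul,
      root_X_pow_sub_C_pow, ← map_pow, ham, sub_eq_zero]
    rfl)

@[simp]
lemma powRootHom_root {m : ℕ} (ham : a ^ m = a) :
    powRootHom m ham (root (X ^ r - C a)) = root _ ^ m :=
  liftAlgHom_root ..

lemma aeval_root_pow {m : ℕ} (ham : a ^ m = a) (f : K[X]) :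
    aeval (root (X ^ r - C a) ^ m) f = powRootHom m ham (aeval (root _) f) := by
  rw [← powRootHom_root ham, aeval_algHom_apply]

lemma powRootHom_mul {m k : ℕ} (hm : a ^ m = a) (hk : a ^ k = a) (hmk : a ^ (m * k) = a) :
    powRootHom (r := r) (m * k) hmk = (powRootHom k hk).comp (powRootHom m hm) :=
  algHom_ext <| by simp [← pow_mul, mul_comm]

end PowRootHom

variable {p r : ℕ} [Fact p.Prime] {a : ZMod p}

lemma powRootHom_pow_card_pow (j : ℕ) (v : AdjoinRoot (X ^ r - C a)) :
    powRootHom (p ^ j) (ZMod.pow_card_pow a) v = v ^ p ^ j := by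
  obtain ⟨f, rfl⟩ := mk_surjective v
  rw [← aeval_eq, ← aeval_root_pow, ZMod.aeval_pow_card_pow]

end AdjoinRoot

open AdjoinRoot

variable {p r : ℕ} [Fact p.Prime] {a : ZMod p}

lemma mem_Gset_iff {m : ℕ} (ham : a ^ m = a) {u : AdjoinRoot (X ^ r - C a)} :
    u ∈ Gset p r a m ↔ u ≠ 0 ∧ powRootHom m ham u = u ^ m := by
  refine and_congr_right fun _ ↦ ⟨fun hu ↦ ?_, fun hu f hf ↦ ?_⟩
  · obtain ⟨f, rfl⟩ := mk_surjective u
    have := hu f (aeval_eq f)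
    rwa [aeval_root_pow ham, aeval_eq] at this
  · rw [aeval_root_pow ham, hf, hu]

lemma Gset_inter_subset_mul {m k : ℕ} (hm : a ^ m = a) (hk : a ^ k = a) :
    Gset p r a m ∩ Gset p r a k ⊆ Gset p r a (m * k) := by
  have hmk : a ^ (m * k) = a := by rw [pow_mul, hm, hk]
  rintro u ⟨hum, huk⟩
  rw [mem_Gset_iff hm] at hum
  rw [mem_Gset_iff hk] at huk
  rw [mem_Gset_iff hmk, powRootHom_mul hm hk, AlgHom.comp_apply, hum.2, map_pow, huk.2,
    ← pow_mul, mul_comm]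
  exact ⟨hum.1, rfl⟩

lemma Gset_subset_pow {m : ℕ} (hm : a ^ m = a) :
    ∀ i : ℕ, Gset p r a m ⊆ Gset p r a (m ^ i)
  | 0 => fun u hu ↦ ⟨hu.1, fun f hf ↦ by rw [pow_zero, pow_one, pow_one, hf]⟩
  | i + 1 => fun u hu ↦ by
    rw [pow_succ]
    exact Gset_inter_subset_mul (pow_pow_eq_self_of_pow_eq_self hm i) hm
      ⟨Gset_subset_pow hm i hu, hu⟩

lemma mem_Gset_pow_card_pow {u : AdjoinRoot (X ^ r - C a)} (hu : u ≠ 0) (j : ℕ) :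
    u ∈ Gset p r a (p ^ j) :=
  (mem_Gset_iff (ZMod.pow_card_pow a)).2 ⟨hu, powRootHom_pow_card_pow j u⟩

lemma Gset_pow_card_pow_mul_subset [Fact (Irreducible (X ^ r - C a))] {l d : ℕ}
    (h : a ^ (p ^ l * d) = a) : Gset p r a (p ^ l * d) ⊆ Gset p r a d := by
  have had : a ^ d = a := by rwa [pow_mul, ZMod.pow_card_pow] at h
  have : CharP (AdjoinRoot (X ^ r - C a)) p := charP_of_injective_algebraMap' (ZMod p) p
  intro u hu
  rw [mul_comm] at h hu
  rw [mem_Gset_iff h] at hu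
  refine (mem_Gset_iff had).2 ⟨hu.1, iterateFrobenius_inj _ p l ?_⟩
  rw [iterateFrobenius_def, iterateFrobenius_def, ← powRootHom_pow_card_pow, ← AlgHom.comp_apply,
    ← powRootHom_mul had (ZMod.pow_card_pow a) h, hu.2, pow_mul]

theorem Gn_subset_Gdipj_general (p r l d n : ℕ) [Fact p.Prime] (hr : r.Prime)
    (a : ZMod p) (ha : ¬ ∃ b : ZMod p, b ^ r = a)
    (hn : n = p ^ l * d) (han : a ^ n = a) :
    ∀ i j : ℕ, Gset p r a n ⊆ Gset p r a (d ^ i * p ^ j) := by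
  intro i j u hu
  have : Fact (Irreducible (X ^ r - C a)) :=
    ⟨X_pow_sub_C_irreducible_of_prime hr fun b hb ↦ ha ⟨b, hb⟩⟩
  subst hn
  have had : a ^ d = a := by rwa [pow_mul, ZMod.pow_card_pow] at han
  have hud : u ∈ Gset p r a d := Gset_pow_card_pow_mul_subset han hu
  exact Gset_inter_subset_mul (pow_pow_eq_self_of_pow_eq_self had i) (ZMod.pow_card_pow a)
    ⟨Gset_subset_pow had i hud, mem_Gset_pow_card_pow hud.1 j⟩

theorem Gn_subset_Gdipj (p r l d n : ℕ) [Fact p.Prime] (hr : r.Prime)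
    (hrp : r ∣ p - 1) (a : ZMod p) (ha : ¬ ∃ b : ZMod p, b ^ r = a)
    (hn : n = p ^ l * d) (hcop : Nat.gcd p d = 1) (han : a ^ n = a) :
    ∀ i j : ℕ, Gset p r a n ⊆ Gset p r a (d ^ i * p ^ j) :=
  Gn_subset_Gdipj_general p r l d n hr a ha hn han
end

section
/- The elements of the set { ∏_{i=0}^{r-1} (1 + A^i θ)^{ε_i} : ε_i ∈ {0,1}, ∑_{i=0}^{r-1} ε_i < r } in 𝔽_p(θ) are pairwise distinct, and this set has cardinality 2^r - 1; in particular its cardinality is at least 2^(r-1). -/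
/-!
Writing `θ` for the root of `f = X ^ r - C a`, the product over `s` is the image in
`𝔽_p[X] / (f)` of `∏_{i ∈ s} (1 + A ^ i X)`, a polynomial of degree `#s`. For `s` a proper
subset of `Fin r` this degree is below `deg f = r`, so two such products agree in the quotient
only if the polynomials agree; and the polynomial determines `s` through its roots `-A⁻ⁱ`,
which are distinct because `A` has order `r`.
-/

open Polynomial

section LinearFactors

variable {K ι : Type*} [Field K] {c : ι → K}

theorem natDegree_prod_C_mul_X_add_one (hc₀ : ∀ i, c i ≠ 0) (s : Finset ι) :
    (∏ i ∈ s, (C (c i) * X + 1)).natDegree = s.card := by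
  have hlin : ∀ i, (C (c i) * X + 1).natDegree = 1 := fun i => by
    simpa using natDegree_linear (b := (1 : K)) (hc₀ i)
  rw [natDegree_prod _ _ fun i _ => ne_zero_of_natDegree_gt (n := 0) (by simp [hlin])]
  simp [hlin]

theorem eval_prod_C_mul_X_add_one_eq_zero_iff (hc : Function.Injective c) (hc₀ : ∀ i, c i ≠ 0)
    (s : Finset ι) (j : ι) :
    (∏ i ∈ s, (C (c i) * X + 1)).eval (-(c j)⁻¹) = 0 ↔ j ∈ s := by
  simp only [eval_prod, eval_add, eval_mul, eval_C, eval_X, eval_one, Finset.prod_eq_zero_iff]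
  have hroot : ∀ i, c i * -(c j)⁻¹ + 1 = 0 ↔ i = j := fun i => by
    rw [mul_neg, neg_add_eq_zero, mul_inv_eq_one₀ (hc₀ j), hc.eq_iff]
  simp only [hroot, exists_eq_right]

theorem prod_C_mul_X_add_one_injective (hc : Function.Injective c) (hc₀ : ∀ i, c i ≠ 0) :
    Function.Injective fun s : Finset ι => ∏ i ∈ s, (C (c i) * X + 1) := by
  intro s t hst
  ext j
  rw [← eval_prod_C_mul_X_add_one_eq_zero_iff hc hc₀,
    ← eval_prod_C_mul_X_add_one_eq_zero_iff hc hc₀]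
  exact Iff.of_eq (congrArg (fun P => P.eval (-(c j)⁻¹) = 0) hst)

end LinearFactors

theorem AdjoinRoot.mk_injOn_degree_lt {R : Type*} [CommRing R] [NoZeroDivisors R] (f : R[X]) :
    Set.InjOn (AdjoinRoot.mk f) {g | g.degree < f.degree} := by
  intro g hg h hh hgh
  rw [AdjoinRoot.mk_eq_mk] at hgh
  exact sub_eq_zero.mp <| eq_zero_of_dvd_of_degree_lt hgh <|
    (degree_sub_le g h).trans_lt (max_lt hg hh)

theorem AdjoinRoot.injOn_prod_one_add_mul_root {K ι : Type*} [Field K] (f : K[X]) {c : ι → K}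
    (hc : Function.Injective c) (hc₀ : ∀ i, c i ≠ 0) :
    Set.InjOn (fun s : Finset ι => ∏ i ∈ s, (1 + algebraMap K (AdjoinRoot f) (c i) * root f))
      {s | s.card < f.natDegree} := by
  have hmk : ∀ s : Finset ι, ∏ i ∈ s, (1 + algebraMap K (AdjoinRoot f) (c i) * root f) =
      AdjoinRoot.mk f (∏ i ∈ s, (C (c i) * X + 1)) := fun s => by
    simp [map_prod, add_comm]
  intro s hs t ht hst
  simp only [hmk] at hst
  refine prod_C_mul_X_add_one_injective hc hc₀ (AdjoinRoot.mk_injOn_degree_lt f ?_ ?_ hst)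
  · exact degree_lt_degree <| (natDegree_prod_C_mul_X_add_one hc₀ s).trans_lt hs
  · exact degree_lt_degree <| (natDegree_prod_C_mul_X_add_one hc₀ t).trans_lt ht

theorem Finset.natCard_setOf_ne_univ (α : Type*) [Fintype α] :
    Nat.card {s : Finset α | s ≠ Finset.univ} = 2 ^ Fintype.card α - 1 := by
  classical
  rw [Nat.card_coe_set_eq, Set.ncard_eq_toFinset_card', Set.toFinset_ofPred, Finset.filter_ne',
    Finset.card_erase_of_mem (Finset.mem_univ _), Finset.card_univ, Fintype.card_finset]

theorem Nat.two_pow_pred_le_two_pow_sub_one {n : ℕ} (hn : n ≠ 0) :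
    2 ^ (n - 1) ≤ 2 ^ n - 1 := by
  obtain ⟨k, rfl⟩ : ∃ k, n = k + 1 := ⟨n - 1, by omega⟩
  rw [Nat.add_sub_cancel, pow_succ]
  have := Nat.one_le_two_pow (n := k)
  omega

theorem products_pairwise_distinct_general (p r : ℕ) [Fact p.Prime] (hr : r.Prime)
    (a : ZMod p) (A : ZMod p) (hA : orderOf A = r) :
    Set.InjOn
      (fun s : Finset (Fin r) => ∏ i ∈ s,
        (1 + algebraMap (ZMod p) (AdjoinRoot (X ^ r - C a)) (A ^ (i : ℕ)) *
          AdjoinRoot.root (X ^ r - C a)))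
      {s : Finset (Fin r) | s ≠ Finset.univ} ∧
    Nat.card ↥((fun s : Finset (Fin r) => ∏ i ∈ s,
        (1 + algebraMap (ZMod p) (AdjoinRoot (X ^ r - C a)) (A ^ (i : ℕ)) *
          AdjoinRoot.root (X ^ r - C a))) ''
      {s : Finset (Fin r) | s ≠ Finset.univ}) = 2 ^ r - 1 ∧
    2 ^ (r - 1) ≤ Nat.card ↥((fun s : Finset (Fin r) => ∏ i ∈ s,
        (1 + algebraMap (ZMod p) (AdjoinRoot (X ^ r - C a)) (A ^ (i : ℕ)) *
          AdjoinRoot.root (X ^ r - C a))) ''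
      {s : Finset (Fin r) | s ≠ Finset.univ}) := by
  have hA₀ : A ≠ 0 := by
    rintro rfl
    exact hr.ne_zero (hA ▸ orderOf_zero (ZMod p))
  have hpow_inj : Function.Injective fun i : Fin r => A ^ (i : ℕ) := fun i j hij =>
    Fin.ext <| pow_injOn_Iio_orderOf (by simp [hA]) (by simp [hA]) hij
  have hproper : {s : Finset (Fin r) | s ≠ Finset.univ} =
      {s | s.card < (X ^ r - C a).natDegree} := by
    ext s
    rw [Set.mem_ofPred_eq, Set.mem_ofPred_eq, natDegree_X_pow_sub_C, ← Finset.card_lt_iff_ne_univ,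
      Fintype.card_fin]
  have hinj := hproper ▸ AdjoinRoot.injOn_prod_one_add_mul_root (X ^ r - C a) hpow_inj
    fun i => pow_ne_zero _ hA₀
  have hcard := (Nat.card_image_of_injOn hinj).trans (Finset.natCard_setOf_ne_univ (Fin r))
  rw [Fintype.card_fin] at hcard
  exact ⟨hinj, hcard, hcard ▸ Nat.two_pow_pred_le_two_pow_sub_one hr.ne_zero⟩

theorem products_pairwise_distinct (p r : ℕ) [Fact p.Prime] (hr : r.Prime)
    (hrp : r ∣ p - 1) (a : ZMod p) (ha : ¬ ∃ b : ZMod p, b ^ r = a)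
    (A : ZMod p) (hA : orderOf A = r) :
    Set.InjOn
      (fun s : Finset (Fin r) => ∏ i ∈ s,
        (1 + algebraMap (ZMod p) (AdjoinRoot (X ^ r - C a)) (A ^ (i : ℕ)) *
          AdjoinRoot.root (X ^ r - C a)))
      {s : Finset (Fin r) | s ≠ Finset.univ} ∧
    Nat.card ↥((fun s : Finset (Fin r) => ∏ i ∈ s,
        (1 + algebraMap (ZMod p) (AdjoinRoot (X ^ r - C a)) (A ^ (i : ℕ)) *
          AdjoinRoot.root (X ^ r - C a))) ''
      {s : Finset (Fin r) | s ≠ Finset.univ}) = 2 ^ r - 1 ∧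
    2 ^ (r - 1) ≤ Nat.card ↥((fun s : Finset (Fin r) => ∏ i ∈ s,
        (1 + algebraMap (ZMod p) (AdjoinRoot (X ^ r - C a)) (A ^ (i : ℕ)) *
          AdjoinRoot.root (X ^ r - C a))) ''
      {s : Finset (Fin r) | s ≠ Finset.univ}) :=
  products_pairwise_distinct_general p r hr a A hA
end

section
/- Berrizbeitia's criterion: let n ≡ 1 (mod 4), s = ⌈2 log₂ log₂ n⌉, and suppose 2^k || n-1 with k ≥ s. If there exists an integer a with Jacobi symbol (a/n) = -1 and a^((n-1)/2) ≡ -1 (mod n), and (1 + x)^n ≡ 1 + x^n in (ℤ/nℤ)[x]/(x^{2^s} - a), then n is a power of a prime. -/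
/-!
Let `p ∣ n` be a prime with `(a/p) = -1`. Comparing the 2-adic valuations of the exponents in
`a^((n-1)/2) ≡ -1 ≡ a^((p-1)/2) (mod p)` gives `p ≡ 1 + 2^k (mod 2^(k+1))`, so
`ω = a^((p-1)/2^s)` is a primitive `2^s`-th root of unity in `𝔽_p`, and a root `ζ` of
`X^(2^s) - a` satisfies `ζ^p = ω ζ` and `ζ^n = ω^e ζ`. Hence `ζ` has degree `2^s` over `𝔽_p`,
and the Frobenius, `n` (by the hypothesis on `(1 + x)^n`) and therefore `r = n/p` act on the
elements `1 + ω^t ζ` as shifts of `t` modulo `2^s`. If `n` is not a power of `p`, the numbers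
`r^i p^j` with `i, j ≤ √(2^s)` are distinct, and pigeonhole yields two of them, `m' < m ≤ n^√(2^s)`,
acting alike. Then the products of the `1 + ω^t ζ` over proper subsets of `{t < 2^s}`, which
are distinct, are `2^(2^s) - 1` roots of `Y^(m-m') - 1`, so `2^(2^s) ≤ n^√(2^s)`. The choice of
`s` gives the reverse inequality, which is strict since `n` is odd.
-/

open Polynomial Finset

lemma pow_sqrt_two_pow_le {n s : ℕ} (hs : 2 * Real.logb 2 (Real.logb 2 n) ≤ s) :
    n ^ Nat.sqrt (2 ^ s) ≤ 2 ^ 2 ^ s := by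
  rcases Nat.lt_or_ge n 2 with hn | hn
  · calc n ^ _ ≤ 1 ^ Nat.sqrt (2 ^ s) := Nat.pow_le_pow_left (by omega) _
      _ ≤ 2 ^ 2 ^ s := by rw [one_pow]; exact Nat.one_le_two_pow
  set M := Nat.sqrt (2 ^ s)
  set L := Real.logb 2 n
  have hL : 0 < L := Real.logb_pos one_lt_two (by exact_mod_cast hn)
  have hL2 : L ^ 2 ≤ 2 ^ s := by
    have h : Real.logb 2 (L ^ 2) ≤ s := by rw [Real.logb_pow]; push_cast; linarith
    simpa using (Real.logb_le_iff_le_rpow one_lt_two (by positivity)).1 h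
  have hM2 : (M : ℝ) ^ 2 ≤ 2 ^ s := by exact_mod_cast Nat.sqrt_le' _
  have hML : M * L ≤ 2 ^ s := by
    refine le_of_sq_le_sq ?_ (by positivity)
    rw [mul_pow]
    calc (M : ℝ) ^ 2 * L ^ 2 ≤ 2 ^ s * 2 ^ s := by gcongr
      _ = (2 ^ s) ^ 2 := by ring
  have h : Real.logb 2 ((n : ℝ) ^ M) ≤ ((2 ^ s : ℕ) : ℝ) := by
    rw [Real.logb_pow]; push_cast; exact hML
  have := (Real.logb_le_iff_le_rpow one_lt_two (by positivity)).1 h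
  rw [Real.rpow_natCast] at this
  exact_mod_cast this

lemma pow_sqrt_two_pow_lt {n s : ℕ} (hn : Odd n) (hs : 2 * Real.logb 2 (Real.logb 2 n) ≤ s) :
    n ^ Nat.sqrt (2 ^ s) < 2 ^ 2 ^ s :=
  (pow_sqrt_two_pow_le hs).lt_of_ne fun h ↦
    Nat.not_even_iff_odd.2 hn.pow (h ▸ Nat.even_pow.2 ⟨even_two, by positivity⟩)

lemma ceil_two_mul_logb_logb_pos {n : ℕ} (hn : 3 ≤ n) :
    0 < ⌈2 * Real.logb 2 (Real.logb 2 n)⌉₊ := by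
  have h2 : (2 : ℝ) ^ (1 : ℝ) < n := by rw [Real.rpow_one]; exact_mod_cast hn
  exact Nat.ceil_pos.2 (mul_pos two_pos (Real.logb_pos one_lt_two
    ((Real.lt_logb_iff_rpow_lt one_lt_two (by positivity)).2 h2)))

lemma exists_odd_eq_two_pow_mul {m k : ℕ} (h : 2 ^ k ∣ m) (h' : ¬2 ^ (k + 1) ∣ m) :
    ∃ u, Odd u ∧ m = 2 ^ k * u := by
  obtain ⟨u, rfl⟩ := h
  rcases Nat.even_or_odd u with ⟨v, rfl⟩ | hu
  · exact absurd ⟨v, by ring⟩ h'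
  · exact ⟨u, hu, rfl⟩

lemma eq_of_pow_two_pow_mul_odd_eq_neg_one {M : Type*} [Monoid M] [HasDistribNeg M]
    (h : (-1 : M) ≠ 1) {x : M} {i j u w : ℕ} (hu : Odd u) (hw : Odd w)
    (hi : x ^ (2 ^ i * u) = -1) (hj : x ^ (2 ^ j * w) = -1) : i = j := by
  wlog hij : i ≤ j generalizing i j u w
  · exact (this hw hu hj hi (le_of_not_ge hij)).symm
  obtain ⟨d, rfl⟩ := Nat.exists_eq_add_of_le hij
  rcases Nat.eq_zero_or_pos d with rfl | hd
  · rfl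
  refine absurd ?_ h
  have hev : Even (2 ^ d * w) := (Nat.even_pow.2 ⟨even_two, hd.ne'⟩).mul_right _
  calc (-1 : M) = (x ^ (2 ^ (i + d) * w)) ^ u := by rw [hj, hu.neg_one_pow]
    _ = (x ^ (2 ^ i * u)) ^ (2 ^ d * w) := by rw [← pow_mul, ← pow_mul, pow_add]; ring_nf
    _ = 1 := by rw [hi, hev.neg_one_pow]

lemma isPrimitiveRoot_pow_of_pow_eq_neg_one {M : Type*} [CommMonoid M] [HasDistribNeg M]
    (h : (-1 : M) ≠ 1) {x : M} {s d : ℕ} (hx : x ^ (2 ^ s * d) = -1) :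
    IsPrimitiveRoot (x ^ d) (2 ^ (s + 1)) := by
  have hord : orderOf (x ^ d) = 2 ^ (s + 1) := orderOf_eq_prime_pow
    (by rw [← pow_mul, mul_comm, hx]; exact h)
    (by rw [pow_succ, pow_mul, ← pow_mul x, mul_comm d, hx, neg_one_sq])
  exact hord ▸ IsPrimitiveRoot.orderOf _

lemma exists_prime_dvd_pow_div_two_eq_neg_one {a : ℤ} {n : ℕ} (h : jacobiSym a n = -1) :
    ∃ p, p.Prime ∧ p ∣ n ∧ p ≠ 2 ∧ (a : ZMod p) ^ (p / 2) = -1 := by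
  obtain ⟨p, hp, hpn, hap⟩ := jacobiSym.eq_neg_one_at_prime_divisor_of_eq_neg_one h
  have := Fact.mk hp
  refine ⟨p, hp, hpn, ?_, ?_⟩
  · rintro rfl
    exact ZMod.nonsquare_of_jacobiSym_eq_neg_one hap
      (FiniteField.isSquare_of_char_two (ZMod.ringChar_zmod_n 2) _)
  · rw [← legendreSym.eq_pow, jacobiSym.legendreSym.to_jacobiSym, hap]
    push_cast; rfl

lemma pow_two_pow_mul_add_one {M : Type*} [Monoid M] {x y : M} {s k v : ℕ} (hsk : s ≤ k)
    (hy : y ^ 2 ^ s = x) : y ^ (2 ^ k * v + 1) = x ^ (2 ^ (k - s) * v) * y := by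
  rw [pow_succ, ← hy, ← pow_mul, ← mul_assoc, ← pow_add, Nat.add_sub_cancel' hsk]

lemma exists_eq_two_pow_mul_add_one {p : ℕ} [Fact p.Prime] (hp2 : p ≠ 2) {x : ZMod p}
    (hxp : x ^ (p / 2) = -1) {k u : ℕ} (hu : Odd u) (hxu : x ^ (2 ^ k * u) = -1) :
    ∃ w, p = 2 ^ (k + 1) * w + 1 ∧ x ^ (2 ^ k * w) = -1 := by
  have hp : p.Prime := Fact.out
  have : Fact (2 < p) := ⟨hp.two_le.lt_of_ne' hp2⟩
  obtain ⟨j, w, hw, hjw⟩ := Nat.exists_eq_two_pow_mul_odd (n := p / 2) (by have := hp.two_le; omega)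
  obtain rfl := eq_of_pow_two_pow_mul_odd_eq_neg_one ZMod.neg_one_ne_one hu hw hxu (hjw ▸ hxp)
  refine ⟨w, ?_, hjw ▸ hxp⟩
  rw [pow_succ', mul_assoc, ← hjw, Nat.two_mul_div_two_add_one_of_odd (hp.odd_of_ne_two hp2)]

lemma ZMod.intCast_pow_eq_neg_one {a : ℤ} {n p m : ℕ} (hpn : p ∣ n)
    (h : a ^ m ≡ -1 [ZMOD n]) : (a : ZMod p) ^ m = -1 := by
  have := (ZMod.intCast_eq_intCast_iff _ _ p).2 (h.of_dvd (Int.natCast_dvd_natCast.2 hpn))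
  rwa [Int.cast_pow, Int.cast_neg, Int.cast_one] at this

lemma one_add_pow_eq_of_pow_eq {n p m : ℕ} {a : ℤ} (hpn : p ∣ n)
    (h : (1 + AdjoinRoot.root (X ^ m - C (a : ZMod n))) ^ n =
      1 + AdjoinRoot.root (X ^ m - C (a : ZMod n)) ^ n)
    {L : Type*} [CommRing L] [Algebra (ZMod p) L] {y : L} (hy : y ^ m = algebraMap (ZMod p) L a) :
    (1 + y) ^ n = 1 + y ^ n := by
  let i := (algebraMap (ZMod p) L).comp (ZMod.castHom hpn (ZMod p))
  have hroot : eval₂ i y (X ^ m - C (a : ZMod n)) = 0 := by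
    rw [eval₂_sub, eval₂_X_pow, eval₂_C, RingHom.comp_apply, map_intCast, hy, sub_self]
  simpa using congrArg (AdjoinRoot.lift i y hroot) h

lemma Nat.eq_and_eq_of_pow_mul_pow_eq {p q r i j i' j' : ℕ} (hp : p.Prime) (hq : q.Prime)
    (hqr : q ∣ r) (hqp : q ≠ p) (hr : r ≠ 0) (h : r ^ i * p ^ j = r ^ i' * p ^ j') :
    i = i' ∧ j = j' := by
  have hfac : ∀ i j, (r ^ i * p ^ j).factorization q = i * r.factorization q := fun i j ↦ by
    rw [Nat.factorization_mul (pow_ne_zero _ hr) (pow_ne_zero _ hp.ne_zero),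
      Nat.factorization_pow, Nat.factorization_pow, hp.factorization]
    simp [hqp.symm]
  have hi : i = i' := Nat.eq_of_mul_eq_mul_right (hq.factorization_pos_of_dvd hr hqr)
    (by rw [← hfac i j, ← hfac i' j', h])
  subst hi
  exact ⟨rfl, Nat.pow_right_injective hp.two_le
    (Nat.eq_of_mul_eq_mul_left (pow_pos (Nat.pos_of_ne_zero hr) _) h)⟩

lemma pow_mul_pow_le_mul_pow {r p i j M : ℕ} (hr : r ≠ 0) (hp : p ≠ 0) (hi : i ≤ M) (hj : j ≤ M) :
    r ^ i * p ^ j ≤ (r * p) ^ M := by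
  rw [mul_pow]
  exact Nat.mul_le_mul (Nat.pow_le_pow_right (Nat.pos_of_ne_zero hr) hi)
    (Nat.pow_le_pow_right (Nat.pos_of_ne_zero hp) hj)

section Shift
variable {M : Type*} [Monoid M] {β : ℕ → M}

lemma pow_pow_eq_of_pow_eq_shift {a c : ℕ} (h : ∀ t, β t ^ a = β (t + c)) (i t : ℕ) :
    β t ^ a ^ i = β (t + i * c) := by
  induction i with
  | zero => simp
  | succ i ih => rw [pow_succ, pow_mul, ih, h, add_assoc, ← Nat.succ_mul]

lemma exists_lt_pow_eq_pow_of_shift {N r p q c : ℕ} (hN : 0 < N)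
    (hper : ∀ t t', t ≡ t' [MOD N] → β t = β t')
    (hβr : ∀ t, β t ^ r = β (t + c)) (hβp : ∀ t, β t ^ p = β (t + 1))
    (hp : p.Prime) (hq : q.Prime) (hqr : q ∣ r) (hqp : q ≠ p) (hr : r ≠ 0) :
    ∃ m m', 0 < m' ∧ m' < m ∧ m ≤ (r * p) ^ Nat.sqrt N ∧ ∀ t, β t ^ m = β t ^ m' := by
  set m : ℕ × ℕ → ℕ := fun x ↦ r ^ x.1 * p ^ x.2
  have hshift : ∀ x t, β t ^ m x = β (t + (x.1 * c + x.2)) := fun x t ↦ by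
    rw [pow_mul, pow_pow_eq_of_pow_eq_shift hβr, pow_pow_eq_of_pow_eq_shift hβp, mul_one,
      add_assoc]
  set S := range (Nat.sqrt N + 1) ×ˢ range (Nat.sqrt N + 1)
  have hcard : #(range N) < #S := by simpa [S, ← sq] using Nat.lt_succ_sqrt' N
  obtain ⟨x, hx, y, hy, hxy, hxy'⟩ := exists_ne_map_eq_of_card_lt_of_maps_to hcard
    (f := fun x ↦ (x.1 * c + x.2) % N) fun x _ ↦ mem_range.2 (Nat.mod_lt _ hN)
  have hm : ∀ t, β t ^ m x = β t ^ m y := fun t ↦ by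
    rw [hshift, hshift]; exact hper _ _ (Nat.ModEq.add_left t hxy')
  have hle : ∀ x ∈ S, m x ≤ (r * p) ^ Nat.sqrt N := fun x hx ↦ by
    simp only [S, mem_product, mem_range, Nat.lt_succ_iff] at hx
    exact pow_mul_pow_le_mul_pow hr hp.ne_zero hx.1 hx.2
  have hpos : ∀ x, 0 < m x := fun x ↦
    Nat.mul_pos (pow_pos (Nat.pos_of_ne_zero hr) _) (pow_pos hp.pos _)
  have hne : m x ≠ m y := fun h ↦
    hxy (Prod.ext_iff.2 (Nat.eq_and_eq_of_pow_mul_pow_eq hp hq hqr hqp hr h))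
  rcases hne.lt_or_gt with h | h
  · exact ⟨m y, m x, hpos x, h, hle y hy, fun t ↦ (hm t).symm⟩
  · exact ⟨m x, m y, hpos y, h, hle x hx, hm⟩

end Shift

section PrimitiveRoot
variable {K : Type*} [Field K] {N : ℕ} {ω : K}

lemma eval_prod_one_add_C_mul_X_eq_zero_iff (hω : IsPrimitiveRoot ω N) {T : Finset ℕ}
    (hT : T ⊆ range N) {i : ℕ} (hi : i < N) :
    eval (-(ω ^ i)⁻¹) (∏ j ∈ T, (1 + C (ω ^ j) * X)) = 0 ↔ i ∈ T := by
  have hωi : ω ^ i ≠ 0 := pow_ne_zero _ (hω.ne_zero (by omega))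
  simp only [eval_prod, eval_add, eval_one, eval_mul, eval_C, eval_X, prod_eq_zero_iff]
  refine ⟨fun ⟨j, hj, hj0⟩ ↦ ?_, fun hiT ↦ ⟨i, hiT, by field_simp; ring⟩⟩
  have : ω ^ j = ω ^ i := by
    field_simp at hj0
    linear_combination -hj0
  exact hω.pow_inj (mem_range.1 (hT hj)) hi this ▸ hj

lemma prod_one_add_C_mul_X_injOn (hω : IsPrimitiveRoot ω N) :
    Set.InjOn (fun T : Finset ℕ ↦ ∏ j ∈ T, (1 + C (ω ^ j) * X)) (range N).powerset := by
  intro A hA B hB hAB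
  simp only [coe_powerset, Set.mem_preimage, Set.mem_powerset_iff, coe_subset] at hA hB
  ext i
  by_cases hi : i < N
  · rw [← eval_prod_one_add_C_mul_X_eq_zero_iff hω hA hi,
      ← eval_prod_one_add_C_mul_X_eq_zero_iff hω hB hi,
      show ∏ j ∈ A, (1 + C (ω ^ j) * X) = ∏ j ∈ B, (1 + C (ω ^ j) * X) from hAB]
  · exact iff_of_false (fun h ↦ hi (mem_range.1 (hA h))) (fun h ↦ hi (mem_range.1 (hB h)))

lemma natDegree_prod_one_add_C_mul_X_le (T : Finset ℕ) :
    (∏ j ∈ T, (1 + C (ω ^ j) * X)).natDegree ≤ #T := by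
  refine (natDegree_prod_le _ _).trans ((sum_le_sum fun j _ ↦ ?_).trans (card_eq_sum_ones T).ge)
  rw [add_comm, ← C_1]
  exact natDegree_linear_le

end PrimitiveRoot

namespace Berrizbeitia

variable {p : ℕ} [Fact p.Prime] {L : Type*} [Field L] [Algebra (ZMod p) L]
  {N : ℕ} {ω : ZMod p} {ζ : L}

/-- When `ζ ^ p = ω ζ`, `conj ω ζ t = (1 + ζ) ^ p ^ t` is a Frobenius conjugate of `1 + ζ`. -/
noncomputable def conj (ω : ZMod p) (ζ : L) (t : ℕ) : L := 1 + algebraMap (ZMod p) L ω ^ t * ζ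

lemma algebraMap_pow_char (ω : ZMod p) : algebraMap (ZMod p) L ω ^ p = algebraMap (ZMod p) L ω := by
  rw [← map_pow, ZMod.pow_card]

lemma pow_char_pow (hζ : ζ ^ p = algebraMap (ZMod p) L ω * ζ) (j : ℕ) :
    ζ ^ p ^ j = algebraMap (ZMod p) L ω ^ j * ζ := by
  induction j with
  | zero => simp
  | succ j ih =>
    rw [pow_succ, pow_mul, ih, mul_pow, hζ, ← pow_mul, mul_comm j, pow_mul, algebraMap_pow_char,
      pow_succ]
    ring

lemma aeval_pow_char_eq_zero {g : (ZMod p)[X]} {y : L} (h : aeval y g = 0) :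
    aeval (y ^ p) g = 0 := by
  rw [← expand_aeval, ZMod.expand_card, map_pow, h, zero_pow (Fact.out : p.Prime).ne_zero]

/- The conjugates `ζ ^ p ^ j = ω ^ j ζ`, `j < N`, are distinct roots of `g`. -/
lemma eq_zero_of_aeval_eq_zero (hω : IsPrimitiveRoot ω N) (hζ : ζ ^ p = algebraMap (ZMod p) L ω * ζ)
    (hζ0 : ζ ≠ 0) {g : (ZMod p)[X]} (hg : aeval ζ g = 0) (hdeg : g.natDegree < N) : g = 0 := by
  have hroot : ∀ j, aeval (ζ ^ p ^ j) g = 0 := fun j ↦ by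
    induction j with
    | zero => simpa using hg
    | succ j ih => rw [pow_succ, pow_mul]; exact aeval_pow_char_eq_zero ih
  have hω' := hω.map_of_injective (algebraMap (ZMod p) L).injective
  apply map_injective (algebraMap (ZMod p) L) (algebraMap (ZMod p) L).injective
  rw [Polynomial.map_zero]
  refine eq_zero_of_natDegree_lt_card_of_eval_eq_zero _
    (f := fun j : Fin N ↦ algebraMap (ZMod p) L ω ^ (j : ℕ) * ζ)
    (fun i j h ↦ Fin.ext (hω'.pow_inj i.2 j.2 (mul_right_cancel₀ hζ0 h)))
    (fun j ↦ ?_) (by simpa using hdeg)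
  rw [eval_map_algebraMap, ← pow_char_pow hζ]
  exact hroot j

lemma conj_pow_char (hζ : ζ ^ p = algebraMap (ZMod p) L ω * ζ) (t : ℕ) :
    conj ω ζ t ^ p = conj ω ζ (t + 1) := by
  have := (Algebra.charP_iff (ZMod p) L p).1 (ZMod.charP p)
  rw [conj, conj, add_pow_char, one_pow, mul_pow, hζ, ← pow_mul, mul_comm t, pow_mul,
    algebraMap_pow_char, pow_succ]
  ring

lemma conj_congr (hω : IsPrimitiveRoot ω N) {t t' : ℕ} (h : t ≡ t' [MOD N]) :
    conj ω ζ t = conj ω ζ t' := by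
  rw [conj, conj, ← map_pow, ← map_pow, ← pow_mod_orderOf, ← hω.eq_orderOf, h, hω.eq_orderOf,
    pow_mod_orderOf]

lemma conj_ne_zero (hω : IsPrimitiveRoot ω N) (hN : 1 < N)
    (hζ : ζ ^ p = algebraMap (ZMod p) L ω * ζ) (hζ0 : ζ ≠ 0) (t : ℕ) : conj ω ζ t ≠ 0 := by
  intro h
  have := eq_zero_of_aeval_eq_zero hω hζ hζ0 (g := ∏ j ∈ {t}, (1 + C (ω ^ j) * X))
    (by simpa [conj] using h) ((natDegree_prod_one_add_C_mul_X_le _).trans_lt (by simpa using hN))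
  simpa using congrArg (eval 0) this

lemma aeval_prod_one_add_C_mul_X (T : Finset ℕ) :
    aeval ζ (∏ j ∈ T, (1 + C (ω ^ j) * X)) = ∏ j ∈ T, conj ω ζ j := by
  simp [conj, map_prod]

lemma prod_conj_injOn (hω : IsPrimitiveRoot ω N) (hζ : ζ ^ p = algebraMap (ZMod p) L ω * ζ)
    (hζ0 : ζ ≠ 0) : Set.InjOn (fun T ↦ ∏ j ∈ T, conj ω ζ j) (range N).ssubsets := by
  intro A hA B hB hAB
  have hA' := mem_ssubsets.1 hA
  have hB' := mem_ssubsets.1 hB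
  refine prod_one_add_C_mul_X_injOn hω (mem_powerset.2 hA'.subset) (mem_powerset.2 hB'.subset)
    (sub_eq_zero.1 (eq_zero_of_aeval_eq_zero hω hζ hζ0 ?_ ?_))
  · rw [map_sub, aeval_prod_one_add_C_mul_X, aeval_prod_one_add_C_mul_X]
    exact sub_eq_zero.2 hAB
  · refine (natDegree_sub_le _ _).trans_lt (max_lt ?_ ?_) <;>
      refine (natDegree_prod_one_add_C_mul_X_le _).trans_lt ?_
    · simpa using card_lt_card hA'
    · simpa using card_lt_card hB'

lemma two_pow_sub_one_le_of_pow_eq_one (hω : IsPrimitiveRoot ω N)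
    (hζ : ζ ^ p = algebraMap (ZMod p) L ω * ζ) (hζ0 : ζ ≠ 0) {m : ℕ} (hm : 0 < m)
    (h : ∀ t, conj ω ζ t ^ m = 1) : 2 ^ N - 1 ≤ m := by
  classical
  calc 2 ^ N - 1 = #(range N).ssubsets := by
        rw [ssubsets, card_erase_of_mem (mem_powerset_self _), card_powerset, card_range]
    _ = #((range N).ssubsets.image fun T ↦ ∏ j ∈ T, conj ω ζ j) :=
        (card_image_of_injOn (prod_conj_injOn hω hζ hζ0)).symm
    _ ≤ #(nthRootsFinset m (1 : L)) := card_le_card fun y hy ↦ by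
        obtain ⟨T, -, rfl⟩ := mem_image.1 hy
        rw [mem_nthRootsFinset hm, ← prod_pow]
        exact prod_eq_one fun j _ ↦ h j
    _ ≤ m := by
        rw [nthRootsFinset_def]
        exact (Multiset.toFinset_card_le _).trans (card_nthRoots _ _)

lemma two_pow_le_of_pow_eq_pow (hω : IsPrimitiveRoot ω N) (hN : 1 < N)
    (hζ : ζ ^ p = algebraMap (ZMod p) L ω * ζ) (hζ0 : ζ ≠ 0) {m m' : ℕ} (hm' : 0 < m')
    (hlt : m' < m) (h : ∀ t, conj ω ζ t ^ m = conj ω ζ t ^ m') : 2 ^ N ≤ m := by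
  have := two_pow_sub_one_le_of_pow_eq_one hω hζ hζ0 (Nat.sub_pos_of_lt hlt) fun t ↦ by
    have h0 := pow_ne_zero m' (conj_ne_zero hω hN hζ hζ0 t)
    rw [pow_sub₀ _ (conj_ne_zero hω hN hζ hζ0 t) hlt.le, h, mul_inv_cancel₀ h0]
  omega

theorem two_pow_le_pow_sqrt (hω : IsPrimitiveRoot ω N) (hN : 1 < N)
    (hζ : ζ ^ p = algebraMap (ZMod p) L ω * ζ) (hζ0 : ζ ≠ 0) {r q e : ℕ} (hq : q.Prime)
    (hqr : q ∣ r) (hqp : q ≠ p) (hr : r ≠ 0)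
    (hn : ∀ t, conj ω ζ t ^ (r * p) = conj ω ζ (t + e)) : 2 ^ N ≤ (r * p) ^ Nat.sqrt N := by
  have := (Algebra.charP_iff (ZMod p) L p).1 (ZMod.charP p)
  -- `r` acts as a shift because `r * p` and the injective Frobenius do
  have hr' : ∀ t, conj ω ζ t ^ r = conj ω ζ (t + (e + N - 1)) := fun t ↦ by
    apply frobenius_inj L p
    rw [frobenius_def, frobenius_def, ← pow_mul, hn, conj_pow_char hζ]
    refine conj_congr hω ?_
    rw [show t + (e + N - 1) + 1 = t + e + N by omega]
    exact (Nat.add_mod_right _ _).symm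
  obtain ⟨m, m', hm', hlt, hle, h⟩ := exists_lt_pow_eq_pow_of_shift (by omega)
    (fun _ _ ↦ conj_congr hω) hr' (conj_pow_char hζ) Fact.out hq hqr hqp hr
  exact (two_pow_le_of_pow_eq_pow hω hN hζ hζ0 hm' hlt h).trans hle

theorem two_pow_two_pow_le_pow_sqrt {p : ℕ} [Fact p.Prime] {L : Type*} [Field L]
    [Algebra (ZMod p) L] [IsAlgClosed L] {x : ZMod p} {n r q s k u w : ℕ} (hs : 0 < s)
    (hsk : s ≤ k + 1) (hp : p = 2 ^ (k + 1) * w + 1) (hxw : x ^ (2 ^ k * w) = -1)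
    (hn : n = 2 ^ (k + 1) * u + 1) (hxu : x ^ (2 ^ k * u) = -1)
    (hpoly : ∀ y : L, y ^ 2 ^ s = algebraMap (ZMod p) L x → (1 + y) ^ n = 1 + y ^ n)
    (hrp : n = r * p) (hq : q.Prime) (hqr : q ∣ r) (hqp : q ≠ p) :
    2 ^ 2 ^ s ≤ n ^ Nat.sqrt (2 ^ s) := by
  have hp' : p.Prime := Fact.out
  have : Fact (2 < p) := ⟨by
    have : p % 2 = 1 := by rw [hp]; simp [Nat.add_mod, Nat.mul_mod, Nat.pow_mod]
    have := hp'.two_le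
    omega⟩
  set ω := x ^ (2 ^ (k + 1 - s) * w)
  have hω : IsPrimitiveRoot ω (2 ^ s) := by
    have := isPrimitiveRoot_pow_of_pow_eq_neg_one ZMod.neg_one_ne_one (s := s - 1)
      (x := x) (d := 2 ^ (k + 1 - s) * w)
      (by rwa [← mul_assoc, ← pow_add, show s - 1 + (k + 1 - s) = k by omega])
    rwa [Nat.sub_add_cancel hs] at this
  have hw0 : w ≠ 0 := by rintro rfl; exact hp'.ne_one (by simpa using hp)
  have hx0 : x ≠ 0 := by rintro rfl; simp [hw0] at hxw
  obtain ⟨ζ, hζ⟩ := IsAlgClosed.exists_pow_nat_eq (algebraMap (ZMod p) L x) (pow_pos two_pos s)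
  have hζ0 : ζ ≠ 0 := by rintro rfl; exact hx0 (by simpa using hζ.symm)
  obtain ⟨e, -, he⟩ := hω.eq_pow_of_pow_eq_one (ξ := x ^ (2 ^ (k + 1 - s) * u)) (by
    rw [← pow_mul, mul_right_comm, ← pow_add, Nat.sub_add_cancel hsk, pow_succ, mul_right_comm,
      pow_mul, hxu, neg_one_sq])
  -- `ω ^ t ζ` is again a root of `X ^ 2 ^ s - x`, and every such root `y` has `y ^ n = ω ^ e y`
  have hconj : ∀ t, conj ω ζ t ^ (r * p) = conj ω ζ (t + e) := fun t ↦ by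
    have hy : (algebraMap (ZMod p) L ω ^ t * ζ) ^ 2 ^ s = algebraMap (ZMod p) L x := by
      rw [mul_pow, ← pow_mul, mul_comm t, pow_mul, ← map_pow, hω.pow_eq_one, map_one, one_pow,
        one_mul, hζ]
    rw [← hrp, conj, hpoly _ hy, hn, pow_two_pow_mul_add_one hsk hy, ← map_pow, ← he,
      conj, map_pow, pow_add]
    ring
  have hζp : ζ ^ p = algebraMap (ZMod p) L ω * ζ := by
    rw [show ζ ^ p = ζ ^ (2 ^ (k + 1) * w + 1) from congrArg (ζ ^ ·) hp,
      pow_two_pow_mul_add_one hsk hζ, map_pow]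
  rw [hrp]
  exact two_pow_le_pow_sqrt hω (Nat.one_lt_two_pow hs.ne') hζp hζ0 hq hqr hqp
    (by rintro rfl; omega) hconj

end Berrizbeitia

theorem berrizbeitia_criterion_general (n s k : ℕ) (a : ℤ)
    (hs : s = ⌈2 * Real.logb 2 (Real.logb 2 n)⌉₊)
    (hdvd : 2 ^ k ∣ n - 1) (hndvd : ¬ 2 ^ (k + 1) ∣ n - 1) (hk : s ≤ k)
    (hjac : jacobiSym a n = -1)
    (hpow : a ^ ((n - 1) / 2) ≡ -1 [ZMOD n])
    (hpoly : (1 + AdjoinRoot.root (X ^ (2 ^ s) - C (a : ZMod n))) ^ n =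
      1 + (AdjoinRoot.root (X ^ (2 ^ s) - C (a : ZMod n))) ^ n) :
    ∃ p l : ℕ, p.Prime ∧ n = p ^ l := by
  by_contra hcon
  have hn0 : n ≠ 0 := by rintro rfl; simp at hjac
  obtain ⟨p, hp, hpn, hp2, hxp⟩ := exists_prime_dvd_pow_div_two_eq_neg_one hjac
  have := Fact.mk hp
  obtain ⟨q, hq, hqn, hqp⟩ : ∃ q, q.Prime ∧ q ∣ n ∧ q ≠ p := by
    by_contra! h
    exact hcon ⟨p, _, hp, Nat.eq_prime_pow_of_unique_prime_dvd hn0 fun hd hdn ↦ h _ hd hdn⟩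
  have hs0 : 0 < s := hs ▸ ceil_two_mul_logb_logb_pos
    ((hp.two_le.lt_of_ne' hp2).trans_le (Nat.le_of_dvd (Nat.pos_of_ne_zero hn0) hpn))
  obtain ⟨k, rfl⟩ := Nat.exists_eq_add_one.2 (hs0.trans_le hk)
  obtain ⟨u, hu, hnu⟩ := exists_odd_eq_two_pow_mul hdvd hndvd
  rw [pow_succ, mul_right_comm] at hnu
  have hxu := ZMod.intCast_pow_eq_neg_one hpn hpow
  rw [hnu, Nat.mul_div_cancel _ two_pos] at hxu
  obtain ⟨w, hpw, hxw⟩ := exists_eq_two_pow_mul_add_one hp2 hxp hu hxu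
  obtain ⟨r, hr⟩ := id hpn
  have hle := Berrizbeitia.two_pow_two_pow_le_pow_sqrt (L := AlgebraicClosure (ZMod p)) hs0 hk
    hpw hxw (by rw [pow_succ, mul_right_comm]; omega) hxu (fun _ ↦ one_add_pow_eq_of_pow_eq hpn hpoly)
    (by rw [hr, mul_comm]) hq (((Nat.coprime_primes hq hp).2 hqp).dvd_of_dvd_mul_left (hr ▸ hqn))
    hqp
  exact hle.not_gt (pow_sqrt_two_pow_lt ⟨2 ^ k * u, by omega⟩ (hs ▸ Nat.le_ceil _))

theorem berrizbeitia_criterion (n s k : ℕ) (a : ℤ)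
    (hn4 : n ≡ 1 [MOD 4])
    (hs : s = ⌈2 * Real.logb 2 (Real.logb 2 n)⌉₊)
    (hdvd : 2 ^ k ∣ n - 1) (hndvd : ¬ 2 ^ (k + 1) ∣ n - 1) (hk : s ≤ k)
    (hjac : jacobiSym a n = -1)
    (hpow : a ^ ((n - 1) / 2) ≡ -1 [ZMOD n])
    (hpoly : (1 + AdjoinRoot.root (X ^ (2 ^ s) - C (a : ZMod n))) ^ n =
      1 + (AdjoinRoot.root (X ^ (2 ^ s) - C (a : ZMod n))) ^ n) :
    ∃ p l : ℕ, p.Prime ∧ n = p ^ l :=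
  berrizbeitia_criterion_general n s k a hs hdvd hndvd hk hjac hpow hpoly
end
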